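/- Let (L,A) be a Lie pair, j: L/A → L a splitting of the short exact sequence 0 → A → L → L/A → 0, and ∇ an L-connection on L/A extending the Bott A-connection, with torsion β^∇. Then for all Y, Z ∈ Γ(L/A), pbw^{∇,j}(Y⊙Z) = j(Y)·j(Z) − j(∇_{j(Y)}Z) + (1/2)·j(β^∇(Y,Z)) in U(L)/U(L)Γ(A). -/
import Mathlib


/-!
Algebraic formalization of Lie algebroids and Lie pairs à la Lie–Rinehart:
`R` plays the role of the algebra `C^∞(M, 𝕜)` of smooth functions and `L`
plays the role of the space of global sections of a Lie algebroid over `𝕜`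
(a vector bundle `L → M` with an anchor `ρ : L → TM ⊗ 𝕜` and a Lie bracket
on sections); the anchor is encoded as an `R`-linear map into `𝕜`-linear
derivations of `R`.
-/

set_option autoImplicit false

noncomputable section

open scoped TensorProduct

/-- A Lie–Rinehart algebra over `(𝕜, R)`: the algebraic model of the space of
sections of a Lie `𝕜`-algebroid `L → M`, where `R = C^∞(M, 𝕜)`.  The anchor
`ρ : Γ(L) → 𝔛(M) ⊗ 𝕜 = Der_𝕜(R)` is `R`-linear and bracket-preserving, and
the Leibniz rule `[X, f • Y] = f • [X, Y] + (ρ(X) f) • Y` holds. -/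
structure LieRinehart (𝕜 R L : Type*) [CommRing 𝕜] [CommRing R] [Algebra 𝕜 R]
    [LieRing L] [LieAlgebra 𝕜 L] [Module R L] where
  anchor : L →ₗ[R] Derivation 𝕜 R R
  anchor_lie : ∀ x y : L, anchor ⁅x, y⁆ = ⁅anchor x, anchor y⁆
  leibniz_rule : ∀ (x y : L) (f : R), ⁅x, f • y⁆ = f • ⁅x, y⁆ + anchor x f • y

variable {𝕜 : Type*} [RCLike 𝕜]
variable {R : Type*} [CommRing R] [Algebra 𝕜 R]
variable {L : Type*} [LieRing L] [LieAlgebra 𝕜 L] [Module R L] [IsScalarTower 𝕜 R L]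
variable {B : Type*} [AddCommGroup B] [Module R B]

/-- `A ⊆ L` is a Lie subalgebroid: an `R`-submodule of (the sections of) `L`
closed under the Lie bracket.  A Lie pair `(L, A)` is such an inclusion
`A ↪ L` of Lie algebroids. -/
def IsLieSubalgebroid (A : Submodule R L) : Prop :=
  ∀ ⦃x y : L⦄, x ∈ A → y ∈ A → ⁅x, y⁆ ∈ A

/-- An `L`-connection (covariant derivative) on an `R`-module `E` (the model of
the sections of a vector bundle): `R`-linear in the `L`-slot, additive in `E`,
with the Leibniz rule `∇_l (f • e) = (ρ(l) f) • e + f • ∇_l e`. -/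
structure LConnection (ℒ : LieRinehart 𝕜 R L) (E : Type*) [AddCommGroup E] [Module R E] where
  conn : L → E → E
  conn_add_left : ∀ (l₁ l₂ : L) (e : E), conn (l₁ + l₂) e = conn l₁ e + conn l₂ e
  conn_smul_left : ∀ (f : R) (l : L) (e : E), conn (f • l) e = f • conn l e
  conn_add_right : ∀ (l : L) (e₁ e₂ : E), conn l (e₁ + e₂) = conn l e₁ + conn l e₂
  conn_leibniz : ∀ (l : L) (f : R) (e : E), conn l (f • e) = ℒ.anchor l f • e + f • conn l e

namespace LConnection

variable {ℒ : LieRinehart 𝕜 R L}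

/-- `∇` extends the Bott `A`-connection on `B = L/A` (where `q : L → B` is the
projection): `∇_a q(l) = q [a, l]` for all `a ∈ A`, `l ∈ L`. -/
def ExtendsBott (A : Submodule R L) (q : L →ₗ[R] B) (nabla : LConnection ℒ B) : Prop :=
  ∀ a ∈ A, ∀ l : L, nabla.conn a (q l) = q ⁅a, l⁆

/-- The torsion `T^∇(l₁, l₂) = ∇_{l₁} q(l₂) − ∇_{l₂} q(l₁) − q [l₁, l₂]`.
(For `∇` extending the Bott `A`-connection this descends to the torsion
`β^∇ : Λ²(L/A) → L/A`, and `β^∇ = 0` iff `T^∇ = 0` since `q` is surjective.) -/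
def torsion (q : L →ₗ[R] B) (nabla : LConnection ℒ B) (l₁ l₂ : L) : B :=
  nabla.conn l₁ (q l₂) - nabla.conn l₂ (q l₁) - q ⁅l₁, l₂⁆

/-- `∇` is torsion-free: `β^∇ = 0`, equivalently `T^∇ = 0`. -/
def IsTorsionFree (q : L →ₗ[R] B) (nabla : LConnection ℒ B) : Prop :=
  ∀ l₁ l₂ : L, nabla.torsion q l₁ l₂ = 0

end LConnection
/-- The algebraic package attached to a Lie pair `(L, A)` with quotient
`B = L/A` (projection `q`), a splitting `j : B → L` of
`0 → A → L → B → 0`, and an `L`-connection `∇` on `B` extending the Bott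
`A`-connection.  It consists of:

* the symmetric `R`-algebra `SB = Γ(S B)` with its comultiplication
  (deconcatenation) `Δ : Γ(S B) → Γ(S B) ⊗_R Γ(S B)`;
* the quotient `D = U(L)/U(L)Γ(A)` of the universal enveloping algebra of the
  Lie algebroid `L` by the left ideal generated by `Γ(A)`, with the class
  `oneD` of `1` and the left `Γ(L)`-action `act l d = class (l · u)`;
* the extension `connS` of `∇` to `Γ(S B)` by derivations
  (`∇_l f = ρ(l) f` on `R` and `∇_l (ιS b) = ιS (∇_l b)`);
* the Poincaré–Birkhoff–Witt isomorphism
  `pbw = pbw^{∇,j} : Γ(S B) → U(L)/U(L)Γ(A)` of (filtered `R`-coalgebras),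
  characterized by `pbw(f) = f·1`, `pbw(b) = j(b)·1`,
  `pbw(b^{n+1}) = j(b)·pbw(b^n) − pbw(∇_{j(b)} b^n)` and its symmetric
  polarization (the recursion `pbw_rec`). -/
structure PBWData (ℒ : LieRinehart 𝕜 R L) (A : Submodule R L)
    (q : L →ₗ[R] B) (j : B →ₗ[R] L) (nabla : LConnection ℒ B) where
  SB : Type*
  [instRingSB : CommRing SB]
  [instAlgSB : Algebra R SB]
  ιS : B →ₗ[R] SB
  comul : SB →ₐ[R] (SB ⊗[R] SB)
  comul_ιS : ∀ b : B, comul (ιS b) = ιS b ⊗ₜ[R] 1 + 1 ⊗ₜ[R] ιS b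
  D : Type*
  [instAddD : AddCommGroup D]
  [instModD : Module R D]
  [instModkD : Module 𝕜 D]
  [instTowerD : IsScalarTower 𝕜 R D]
  oneD : D
  act : L → D → D
  act_add_left : ∀ (l₁ l₂ : L) (d : D), act (l₁ + l₂) d = act l₁ d + act l₂ d
  act_smul_left : ∀ (f : R) (l : L) (d : D), act (f • l) d = f • act l d
  act_add_right : ∀ (l : L) (d₁ d₂ : D), act l (d₁ + d₂) = act l d₁ + act l d₂
  act_leibniz : ∀ (l : L) (f : R) (d : D), act l (f • d) = f • act l d + ℒ.anchor l f • d
  act_lie : ∀ (l₁ l₂ : L) (d : D), act ⁅l₁, l₂⁆ d = act l₁ (act l₂ d) - act l₂ (act l₁ d)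
  act_ann : ∀ a ∈ A, act a oneD = 0
  connS : L → SB → SB
  connS_add_left : ∀ (l₁ l₂ : L) (s : SB), connS (l₁ + l₂) s = connS l₁ s + connS l₂ s
  connS_smul_left : ∀ (f : R) (l : L) (s : SB), connS (f • l) s = f • connS l s
  connS_add_right : ∀ (l : L) (s₁ s₂ : SB), connS l (s₁ + s₂) = connS l s₁ + connS l s₂
  connS_mul : ∀ (l : L) (s₁ s₂ : SB), connS l (s₁ * s₂) = connS l s₁ * s₂ + s₁ * connS l s₂
  connS_algebraMap : ∀ (l : L) (f : R),
    connS l (algebraMap R SB f) = algebraMap R SB (ℒ.anchor l f)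
  connS_ιS : ∀ (l : L) (b : B), connS l (ιS b) = ιS (nabla.conn l b)
  pbw : SB ≃ₗ[R] D
  pbw_algebraMap : ∀ f : R, pbw (algebraMap R SB f) = f • oneD
  pbw_ιS : ∀ b : B, pbw (ιS b) = act (j b) oneD
  pbw_pow : ∀ (b : B) (n : ℕ),
    pbw (ιS b ^ (n + 1)) = act (j b) (pbw (ιS b ^ n)) - pbw (connS (j b) (ιS b ^ n))
  pbw_rec : ∀ (n : ℕ) (b : Fin (n + 1) → B),
    (n + 1) • pbw (∏ i, ιS (b i)) =
      ∑ i : Fin (n + 1),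
        (act (j (b i)) (pbw (∏ k ∈ Finset.univ.erase i, ιS (b k)))
          - pbw (connS (j (b i)) (∏ k ∈ Finset.univ.erase i, ιS (b k))))

attribute [instance] PBWData.instRingSB PBWData.instAlgSB PBWData.instAddD
  PBWData.instModD PBWData.instModkD PBWData.instTowerD

namespace PBWData

variable {ℒ : LieRinehart 𝕜 R L} {A : Submodule R L} {q : L →ₗ[R] B} {j : B →ₗ[R] L}
  {nabla : LConnection ℒ B} (P : PBWData ℒ A q j nabla)

/-- The flat `L`-connection `∇⚡_l s = pbw⁻¹ (l · pbw s)` on `S B` obtained by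
transferring the canonical `Γ(L)`-action on `U(L)/U(L)Γ(A)` through `pbw`. -/
def flat (l : L) (s : P.SB) : P.SB := P.pbw.symm (P.act l (P.pbw s))

/-- `Θ(l; s) = ∇⚡_l s − ∇_l s − q(l) ⊙ s`. -/
def theta (l : L) (s : P.SB) : P.SB := P.flat l s - P.connS l s - P.ιS (q l) * s

/-- The ascending filtration `Γ(S^{≤n} B)` of the symmetric algebra. -/
def sFil (n : ℕ) : Submodule R P.SB :=
  Submodule.span R {x : P.SB | ∃ m ≤ n, ∃ b : Fin m → B, x = ∏ i, P.ιS (b i)}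

/-- The filtration of `D = U(L)/U(L)Γ(A)` induced by the filtration
`U^{≤n}(L)` of the universal enveloping algebra: the `R`-span of iterated
actions of at most `n` sections of `L` on the class of `1`. -/
def dFil (n : ℕ) : Submodule R P.D :=
  Submodule.span R {d : P.D | ∃ m ≤ n, ∃ l : Fin m → L,
    d = (List.ofFn fun i => l i).foldr P.act P.oneD}

end PBWData
namespace PBWData

variable {𝕜' : Type*} [RCLike 𝕜'] {R' : Type*} [CommRing R'] [Algebra 𝕜' R']
    {L' : Type*} [LieRing L'] [LieAlgebra 𝕜' L'] [Module R' L'] [IsScalarTower 𝕜' R' L']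
    {B' : Type*} [AddCommGroup B'] [Module R' B']
variable {ℒ : LieRinehart 𝕜' R' L'} {A : Submodule R' L'} {q : L' →ₗ[R'] B'}
  {j : B' →ₗ[R'] L'} {nabla : LConnection ℒ B'} (P : PBWData ℒ A q j nabla)

lemma act_zero_left (d : P.D) : P.act 0 d = 0 := by
  have h := P.act_add_left 0 0 d
  simp only [add_zero] at h
  exact left_eq_add.mp h

lemma act_neg_left (l : L') (d : P.D) : P.act (-l) d = -P.act l d := by
  have h := P.act_add_left l (-l) d
  rw [add_neg_cancel, P.act_zero_left] at h
  exact (neg_eq_of_add_eq_zero_right h.symm).symm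

lemma act_sub_left (l₁ l₂ : L') (d : P.D) :
    P.act (l₁ - l₂) d = P.act l₁ d - P.act l₂ d := by
  rw [sub_eq_add_neg, P.act_add_left, P.act_neg_left, sub_eq_add_neg]

end PBWData

/-- **Proposition “Glacière”.**
Let `(L, A)` be a Lie pair, `j : L/A → L` a splitting of the short exact
sequence `0 → A → L → L/A → 0`, and `∇` an `L`-connection on `L/A` extending
the Bott `A`-connection, with torsion `β^∇`.  Then for all `Y, Z ∈ Γ(L/A)`,
`pbw^{∇,j}(Y ⊙ Z) = j(Y) · j(Z) − j(∇_{j(Y)} Z) + (1/2) · j(β^∇(Y, Z))`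
in `U(L)/U(L)Γ(A)`; the products are computed in `U(L)` and projected to the
quotient, i.e. expressed through the action `act` on the class `oneD` of `1`,
and `β^∇(Y, Z) = T^∇(j(Y), j(Z))`. -/
theorem statement17
    {𝕜 : Type*} [RCLike 𝕜] {R : Type*} [CommRing R] [Algebra 𝕜 R]
    {L : Type*} [LieRing L] [LieAlgebra 𝕜 L] [Module R L] [IsScalarTower 𝕜 R L]
    {B : Type*} [AddCommGroup B] [Module R B]
    (ℒ : LieRinehart 𝕜 R L) (A : Submodule R L) (hA : IsLieSubalgebroid A)
    (q : L →ₗ[R] B) (hq : Function.Surjective q) (hker : LinearMap.ker q = A)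
    (j : B →ₗ[R] L) (hj : ∀ b : B, q (j b) = b)
    (nabla : LConnection ℒ B) (hBott : nabla.ExtendsBott A q)
    (P : PBWData ℒ A q j nabla) :
    ∀ Y Z : B,
      P.pbw (P.ιS Y * P.ιS Z)
        = P.act (j Y) (P.act (j Z) P.oneD)
            - P.act (j (nabla.conn (j Y) Z)) P.oneD
            + (2⁻¹ : 𝕜) • P.act (j (nabla.torsion q (j Y) (j Z))) P.oneD := by
  intro Y Z
  -- The PBW recursion with n = 1 applied to (Y, Z)
  have hrec := P.pbw_rec 1 ![Y, Z]
  have herase0 : (Finset.univ.erase (0 : Fin 2)) = {1} := by decide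
  have herase1 : (Finset.univ.erase (1 : Fin 2)) = {0} := by decide
  rw [Fin.sum_univ_two, herase0, herase1] at hrec
  simp only [Finset.prod_singleton, Matrix.cons_val_zero, Matrix.cons_val_one,
    Matrix.head_cons, Fin.prod_univ_two, P.connS_ιS, P.pbw_ιS] at hrec
  -- hrec : 2 • P.pbw (ιS Y * ιS Z) = ...
  -- The bracket modulo A
  have haA : ⁅j Y, j Z⁆ - j (q ⁅j Y, j Z⁆) ∈ A := by
    rw [← hker, LinearMap.mem_ker, map_sub, hj, sub_self]
  have hbr : P.act (j (q ⁅j Y, j Z⁆)) P.oneD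
      = P.act (j Y) (P.act (j Z) P.oneD) - P.act (j Z) (P.act (j Y) P.oneD) := by
    have h0 := P.act_ann _ haA
    rw [P.act_sub_left] at h0
    have h1 : P.act (j (q ⁅j Y, j Z⁆)) P.oneD = P.act ⁅j Y, j Z⁆ P.oneD :=
      (sub_eq_zero.mp h0).symm
    rw [h1, P.act_lie]
  -- torsion expansion
  have htor : P.act (j (nabla.torsion q (j Y) (j Z))) P.oneD
      = P.act (j (nabla.conn (j Y) Z)) P.oneD - P.act (j (nabla.conn (j Z) Y)) P.oneD
        - (P.act (j Y) (P.act (j Z) P.oneD) - P.act (j Z) (P.act (j Y) P.oneD)) := by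
    rw [LConnection.torsion, hj, hj, map_sub, map_sub, P.act_sub_left, P.act_sub_left, hbr]
  -- cancel the factor 2
  have two_ne : (2 : 𝕜) ≠ 0 := two_ne_zero
  have hinj : Function.Injective (fun d : P.D => (2 : 𝕜) • d) := by
    intro x y h
    have := congrArg (fun d : P.D => (2 : 𝕜)⁻¹ • d) h
    simpa [smul_smul, inv_mul_cancel₀ two_ne] using this
  apply hinj
  simp only []
  have h2 : ∀ d : P.D, (2 : 𝕜) • d = d + d := fun d => by
    rw [two_smul]
  have hprod : (∏ i : Fin (1 + 1), P.ιS (![Y, Z] i)) = P.ιS Y * P.ιS Z := by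
    simp [Fin.prod_univ_succ]
  rw [hprod, add_nsmul, one_nsmul] at hrec
  rw [h2 (P.pbw (P.ιS Y * P.ιS Z)), hrec]
  rw [smul_add, smul_sub, smul_smul, mul_inv_cancel₀ two_ne, one_smul, htor, h2, h2]
  abel
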